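/- Let Δ be an irreducible root system, α a simple root, d = d_α = ht_α(θ), C = (c_{αβ}) the inverse Cartan matrix. Then for every k ≥ 1: ht_α(|Δ_α(k)|) = k · #Δ_α(k) = c_{αα} · q_α(k). Consequently, (d − i)·#Δ_α(d−i) = i·#Δ_α(i) for 1 ≤ i ≤ d−1; in particular #Δ_α(d−1) = #Δ_α(1)/(d−1). -/

import Mathlib

open scoped RealInnerProductSpace
open scoped Classical

/-- An (irreducible, reduced, crystallographic) root system in a real inner product
space `V`, together with a choice of base (simple roots), coordinate functions with
respect to the base, and fundamental weights. -/
structure RootSystemData (V : Type*) [NormedAddCommGroup V] [InnerProductSpace ℝ V] where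
  Δ : Finset V
  base : Finset V
  base_sub : base ⊆ Δ
  root_ne_zero : ∀ γ ∈ Δ, γ ≠ 0
  span_eq_top : Submodule.span ℝ (Δ : Set V) = ⊤
  reflect_mem : ∀ γ ∈ Δ, ∀ δ ∈ Δ, δ - (2 * ⟪δ, γ⟫ / ⟪γ, γ⟫) • γ ∈ Δ
  crystallographic : ∀ γ ∈ Δ, ∀ δ ∈ Δ, ∃ k : ℤ, 2 * ⟪δ, γ⟫ / ⟪γ, γ⟫ = (k : ℝ)
  reduced : ∀ γ ∈ Δ, (2 : ℝ) • γ ∉ Δ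
  coord : V → V → ℝ
  coord_add : ∀ α x y, coord (x + y) α = coord x α + coord y α
  coord_smul : ∀ α (c : ℝ) (x : V), coord (c • x) α = c * coord x α
  coord_base : ∀ α ∈ base, ∀ β ∈ base, coord β α = if β = α then 1 else 0
  root_decomp : ∀ γ ∈ Δ, γ = ∑ α ∈ base, coord γ α • α
  pos_or_neg : ∀ γ ∈ Δ, (∀ α ∈ base, 0 ≤ coord γ α) ∨ (∀ α ∈ base, coord γ α ≤ 0)
  coord_int : ∀ γ ∈ Δ, ∀ α ∈ base, ∃ k : ℤ, coord γ α = (k : ℝ)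
  irreducible : ∀ S ⊆ Δ, S.Nonempty →
    (∀ γ ∈ S, ∀ δ ∈ Δ, δ ∉ S → ⟪γ, δ⟫ = 0) → S = Δ
  fw : V → V
  fw_spec : ∀ α ∈ base, ∀ β ∈ base, ⟪fw α, β⟫ = if β = α then ⟪α, α⟫ / 2 else 0

namespace RootSystemData

variable {V : Type*} [NormedAddCommGroup V] [InnerProductSpace ℝ V]

/-- The set of positive roots (nonnegative coordinates w.r.t. the base). -/
noncomputable def posRoots (R : RootSystemData V) : Finset V :=
  R.Δ.filter fun γ => ∀ α ∈ R.base, 0 ≤ R.coord γ α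

/-- The height of a root: the sum of its coordinates in the base. -/
noncomputable def ht (R : RootSystemData V) (γ : V) : ℝ :=
  ∑ α ∈ R.base, R.coord γ α

/-- The height of the coroot `γ^∨` in the dual root system. -/
noncomputable def dualHt (R : RootSystemData V) (γ : V) : ℝ :=
  ∑ α ∈ R.base, R.coord γ α * ⟪α, α⟫ / ⟪γ, γ⟫

/-- `R_α`: the set of roots having positive inner product with the fundamental
weight `ϖ_α`. -/
noncomputable def Rset (R : RootSystemData V) (α : V) : Finset V :=
  R.Δ.filter fun γ => 0 < ⟪γ, R.fw α⟫

/-- `Δ_α(i)`: the set of roots whose coefficient of `α` equals `i`. -/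
noncomputable def level (R : RootSystemData V) (α : V) (i : ℤ) : Finset V :=
  R.Δ.filter fun γ => R.coord γ α = (i : ℝ)

end RootSystemData

open scoped Finset

/-!
Additivity of `coord_α` gives `ht_α(|Δ_α(k)|) = k·#Δ_α(k)`, and `|Δ_α(k)| = q_α(k) ϖ_α` turns this
into `c_{αα} q_α(k)`. For the symmetry, the reflection `s_θ` in the highest root changes the
`α`-coordinate of a root by a multiple of `d` and keeps it in `[-d, d]`, so it permutes
`Δ_α(i) ∪ Δ_α(i - d) = Δ_α(i) ∪ -Δ_α(d - i)`. The sum `(q_α(i) - q_α(d - i)) ϖ_α` of this set is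
therefore fixed by `s_θ`, i.e. orthogonal to `θ`; as `⟪ϖ_α, θ⟫ = d ⟪α, α⟫ / 2 ≠ 0`, this forces
`q_α(i) = q_α(d - i)`.
-/

theorem Int.eq_or_eq_sub_of_dvd_sub {d i m : ℤ} (hi : 0 < i) (hid : i < d) (hm : |m| ≤ d)
    (hdvd : d ∣ m - i) : m = i ∨ m = i - d := by
  obtain ⟨q, hq⟩ := hdvd
  rw [abs_le] at hm
  have hq_lt : q < 1 := by by_contra!; nlinarith
  have hq_gt : -2 < q := by by_contra!; nlinarith
  interval_cases q <;> omega

section Reflection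

variable {V : Type*} [NormedAddCommGroup V] [InnerProductSpace ℝ V]

/-- The reflection in `θ`, in the form used by `RootSystemData.reflect_mem`. -/
noncomputable def reflectAlong (θ : V) : V →ₗ[ℝ] V where
  toFun x := x - (2 * ⟪x, θ⟫ / ⟪θ, θ⟫) • θ
  map_add' x y := by simp only [inner_add_left, mul_add, add_div, add_smul]; abel
  map_smul' c x := by
    simp only [real_inner_smul_left, smul_sub, smul_smul, RingHom.id_apply]
    congr 2
    ring

theorem reflectAlong_apply (θ x : V) : reflectAlong θ x = x - (2 * ⟪x, θ⟫ / ⟪θ, θ⟫) • θ :=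
  rfl

theorem inner_reflectAlong_self {θ : V} (hθ : θ ≠ 0) (x : V) :
    ⟪reflectAlong θ x, θ⟫ = -⟪x, θ⟫ := by
  have : ⟪θ, θ⟫ ≠ 0 := inner_self_ne_zero.mpr hθ
  rw [reflectAlong_apply, inner_sub_left, real_inner_smul_left]
  field_simp
  ring

theorem reflectAlong_reflectAlong {θ : V} (hθ : θ ≠ 0) (x : V) :
    reflectAlong θ (reflectAlong θ x) = x := by
  rw [reflectAlong_apply (x := reflectAlong θ x), inner_reflectAlong_self hθ, reflectAlong_apply,
    mul_neg, neg_div, neg_smul, sub_neg_eq_add, sub_add_cancel]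

theorem inner_sum_eq_zero_of_reflectAlong_mem {θ : V} (hθ : θ ≠ 0) {S : Finset V}
    (hS : ∀ x ∈ S, reflectAlong θ x ∈ S) : ⟪∑ x ∈ S, x, θ⟫ = 0 := by
  have hfix : reflectAlong θ (∑ x ∈ S, x) = ∑ x ∈ S, x := by
    rw [map_sum]
    exact Finset.sum_nbij' (reflectAlong θ) (reflectAlong θ) hS hS
      (fun x _ => reflectAlong_reflectAlong hθ x) (fun x _ => reflectAlong_reflectAlong hθ x)
      fun _ _ => rfl
  have h := inner_reflectAlong_self hθ (∑ x ∈ S, x)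
  rw [hfix] at h
  linarith

end Reflection

namespace RootSystemData

variable {V : Type*} [NormedAddCommGroup V] [InnerProductSpace ℝ V] (R : RootSystemData V)

noncomputable def coordₗ (α : V) : V →ₗ[ℝ] ℝ where
  toFun x := R.coord x α
  map_add' := R.coord_add α
  map_smul' := R.coord_smul α

theorem coord_neg (α x : V) : R.coord (-x) α = -R.coord x α :=
  map_neg (R.coordₗ α) x

theorem coord_sum {ι : Type*} (s : Finset ι) (f : ι → V) (α : V) :
    R.coord (∑ i ∈ s, f i) α = ∑ i ∈ s, R.coord (f i) α :=
  map_sum (R.coordₗ α) f s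

theorem coord_reflectAlong (θ γ α : V) :
    R.coord (reflectAlong θ γ) α = R.coord γ α - 2 * ⟪γ, θ⟫ / ⟪θ, θ⟫ * R.coord θ α := by
  change R.coordₗ α (γ - _ • θ) = R.coordₗ α γ - _ * R.coordₗ α θ
  rw [map_sub, map_smul, smul_eq_mul]

theorem neg_mem {γ : V} (hγ : γ ∈ R.Δ) : -γ ∈ R.Δ := by
  have hγγ : ⟪γ, γ⟫ ≠ 0 := inner_self_ne_zero.mpr (R.root_ne_zero γ hγ)
  have h := R.reflect_mem γ hγ γ hγ
  rwa [mul_div_assoc, div_self hγγ, mul_one, two_smul, sub_add_cancel_left] at h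

theorem mem_level {α γ : V} {k : ℤ} : γ ∈ R.level α k ↔ γ ∈ R.Δ ∧ R.coord γ α = k :=
  Finset.mem_filter

theorem coord_sum_level (α : V) (k : ℤ) :
    R.coord (∑ γ ∈ R.level α k, γ) α = k * #(R.level α k) := by
  rw [R.coord_sum, Finset.sum_congr rfl fun γ hγ => (R.mem_level.mp hγ).2,
    Finset.sum_const, nsmul_eq_mul, mul_comm]

theorem sum_level_neg (α : V) (k : ℤ) :
    ∑ γ ∈ R.level α (-k), γ = -∑ γ ∈ R.level α k, γ := by
  rw [← Finset.sum_neg_distrib]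
  refine Finset.sum_nbij' Neg.neg Neg.neg ?_ ?_ (fun γ _ => neg_neg γ) (fun γ _ => neg_neg γ)
    (fun γ _ => (neg_neg γ).symm)
  all_goals
    intro γ hγ
    simp only [mem_level, R.coord_neg, Int.cast_neg] at hγ ⊢
    exact ⟨R.neg_mem hγ.1, by linarith [hγ.2]⟩

theorem inner_fw_of_mem {α : V} (hα : α ∈ R.base) {γ : V} (hγ : γ ∈ R.Δ) :
    ⟪R.fw α, γ⟫ = R.coord γ α * (⟪α, α⟫ / 2) := by
  conv_lhs => rw [R.root_decomp γ hγ]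
  rw [inner_sum, Finset.sum_eq_single_of_mem α hα fun β hβ hβα => by
    rw [real_inner_smul_right, R.fw_spec α hα β hβ, if_neg hβα, mul_zero]]
  rw [real_inner_smul_right, R.fw_spec α hα α hα, if_pos rfl]

theorem abs_coord_le {α θ : V} (hθmax : ∀ γ ∈ R.Δ, R.coord γ α ≤ R.coord θ α) {δ : V}
    (hδ : δ ∈ R.Δ) : |R.coord δ α| ≤ R.coord θ α := by
  have := hθmax (-δ) (R.neg_mem hδ)
  rw [R.coord_neg] at this
  exact abs_le.mpr ⟨by linarith, hθmax δ hδ⟩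

theorem mul_card_level_eq {α : V} {k : ℤ} {q : ℝ} (hq : ∑ γ ∈ R.level α k, γ = q • R.fw α) :
    (k : ℝ) * #(R.level α k) = R.coord (R.fw α) α * q := by
  rw [← R.coord_sum_level, hq, R.coord_smul, mul_comm]

theorem reflectAlong_mem_level_union {α θ : V} (hθ : θ ∈ R.Δ)
    (hθmax : ∀ γ ∈ R.Δ, R.coord γ α ≤ R.coord θ α) {d i : ℤ} (hd : R.coord θ α = d)
    (hi : 0 < i) (hid : i < d) {γ : V} (hγ : γ ∈ R.level α i ∪ R.level α (i - d)) :
    reflectAlong θ γ ∈ R.level α i ∪ R.level α (i - d) := by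
  obtain ⟨hγΔ, c, hc, hci⟩ : γ ∈ R.Δ ∧ ∃ c : ℤ, R.coord γ α = c ∧ d ∣ c - i := by
    rcases Finset.mem_union.mp hγ with h | h <;> obtain ⟨hΔ, hc⟩ := R.mem_level.mp h
    · exact ⟨hΔ, i, hc, by simp⟩
    · exact ⟨hΔ, i - d, hc, ⟨-1, by ring⟩⟩
  obtain ⟨n, hn⟩ := R.crystallographic θ hθ γ hγΔ
  have hmem : reflectAlong θ γ ∈ R.Δ := R.reflect_mem θ hθ γ hγΔ
  have hcoord : R.coord (reflectAlong θ γ) α = ((c - n * d : ℤ) : ℝ) := by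
    rw [R.coord_reflectAlong, hn, hc, hd]
    push_cast
    ring
  have habs : |c - n * d| ≤ d := by
    have := R.abs_coord_le hθmax hmem
    rw [hcoord, hd] at this
    exact_mod_cast this
  have hdvd : d ∣ c - n * d - i := by
    simpa only [sub_right_comm] using dvd_sub hci (dvd_mul_left d n)
  rcases Int.eq_or_eq_sub_of_dvd_sub hi hid habs hdvd with h | h
  · exact Finset.mem_union_left _ (R.mem_level.mpr ⟨hmem, by rw [hcoord, h]⟩)
  · exact Finset.mem_union_right _ (R.mem_level.mpr ⟨hmem, by rw [hcoord, h]⟩)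

theorem card_level_symm {α θ : V} (hα : α ∈ R.base) (hθ : θ ∈ R.Δ)
    (hθmax : ∀ γ ∈ R.Δ, R.coord γ α ≤ R.coord θ α) {d i : ℤ} (hd : R.coord θ α = d)
    (hi : 0 < i) (hid : i < d) {q q' : ℝ} (hq : ∑ γ ∈ R.level α i, γ = q • R.fw α)
    (hq' : ∑ γ ∈ R.level α (d - i), γ = q' • R.fw α) :
    ((d - i : ℤ) : ℝ) * #(R.level α (d - i)) = i * #(R.level α i) := by
  have horth := inner_sum_eq_zero_of_reflectAlong_mem (R.root_ne_zero θ hθ)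
    fun γ hγ => R.reflectAlong_mem_level_union hθ hθmax hd hi hid hγ
  have hdisj : Disjoint (R.level α i) (R.level α (i - d)) := by
    refine Finset.disjoint_left.mpr fun γ h₁ h₂ => ?_
    have : (i : ℝ) = (i - d : ℤ) := (R.mem_level.mp h₁).2.symm.trans (R.mem_level.mp h₂).2
    have : i = i - d := by exact_mod_cast this
    omega
  have hsum : ∑ γ ∈ R.level α i ∪ R.level α (i - d), γ = (q - q') • R.fw α := by
    rw [Finset.sum_union hdisj, show i - d = -(d - i) by ring, R.sum_level_neg, hq, hq',
      sub_smul, sub_eq_add_neg]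
  have hfwθ : ⟪R.fw α, θ⟫ ≠ 0 := by
    have : 0 < ⟪α, α⟫ := real_inner_self_pos.mpr (R.root_ne_zero α (R.base_sub hα))
    have : (0 : ℝ) < d := by exact_mod_cast hi.trans hid
    rw [R.inner_fw_of_mem hα hθ, hd]
    positivity
  have hqq : q = q' := by
    rw [hsum, real_inner_smul_left] at horth
    exact sub_eq_zero.mp ((mul_eq_zero.mp horth).resolve_right hfwθ)
  rw [R.mul_card_level_eq hq, R.mul_card_level_eq hq', hqq]

end RootSystemData

/-- With `c_{αα} = coord_α(ϖ_α)` the diagonal entry of the inverse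
Cartan matrix: for every `k ≥ 1`,
`ht_α(|Δ_α(k)|) = k·#Δ_α(k) = c_{αα}·q_α(k)`; consequently
`(d−i)·#Δ_α(d−i) = i·#Δ_α(i)` for `1 ≤ i ≤ d−1`, and in particular
`#Δ_α(d−1) = #Δ_α(1)/(d−1)`. -/
theorem coord_sum_level_eq
    {V : Type*} [NormedAddCommGroup V] [InnerProductSpace ℝ V]
    (R : RootSystemData V) (α : V) (hα : α ∈ R.base)
    (θ : V) (hθ : θ ∈ R.Δ)
    (hθmax : ∀ γ ∈ R.Δ, ∀ β ∈ R.base, R.coord γ β ≤ R.coord θ β)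
    (d : ℕ) (hd : (d : ℝ) = R.coord θ α)
    (qfun : ℕ → ℝ)
    (hqfun : ∀ i : ℕ, (∑ γ ∈ R.level α (i : ℤ), γ) = qfun i • R.fw α) :
    (∀ k : ℕ, 1 ≤ k →
      R.coord (∑ γ ∈ R.level α (k : ℤ), γ) α = (k : ℝ) * ((R.level α (k : ℤ)).card : ℝ) ∧
      (k : ℝ) * ((R.level α (k : ℤ)).card : ℝ) = R.coord (R.fw α) α * qfun k) ∧
    (∀ i : ℕ, 1 ≤ i → i ≤ d - 1 →
      ((d : ℝ) - (i : ℝ)) * ((R.level α ((d : ℤ) - (i : ℤ))).card : ℝ)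
        = (i : ℝ) * ((R.level α (i : ℤ)).card : ℝ)) ∧
    (2 ≤ d →
      ((d : ℝ) - 1) * ((R.level α ((d : ℤ) - 1)).card : ℝ)
        = ((R.level α 1).card : ℝ)) := by
  have card_symm : ∀ i : ℕ, 1 ≤ i → i ≤ d - 1 →
      ((d : ℝ) - (i : ℝ)) * ((R.level α ((d : ℤ) - (i : ℤ))).card : ℝ)
        = (i : ℝ) * ((R.level α (i : ℤ)).card : ℝ) := by
    intro i hi hid
    have hdi : ((d - i : ℕ) : ℤ) = d - i := by omega
    have := R.card_level_symm hα hθ (fun γ hγ => hθmax γ hγ α hα) (d := d) (i := i)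
      (by exact_mod_cast hd.symm) (by omega) (by omega) (hqfun i) (hdi ▸ hqfun (d - i))
    exact_mod_cast this
  refine ⟨fun k _ => ⟨R.coord_sum_level α k, R.mul_card_level_eq (hqfun k)⟩, card_symm, fun hd2 => ?_⟩
  simpa using card_symm 1 le_rfl (by omega)
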